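/- Let α ∈ (0,1), β ∈ (1/(1+α), 1), and suppose U : B₁ → ℝ is strictly convex with U(0) = 0, DU(0) = 0, U ∈ C^{1,β}(B₁), and U* ∈ C^{2,α} on a neighborhood of 0 in ∂U(B₁). Then the minimum eigenvalue of D²U*(0) is strictly positive. -/

import Mathlib

open Real RealInnerProductSpace Metric Set Filter Topology

/-!
Convexity gives `U x ≤ U 0 + ⟪∇U x, x⟫`, and the Hölder bound on `∇U` with `∇U 0 = 0` turns this
into `U x ≤ L ‖x‖ ^ (1 + β)`. Testing the supremum defining `U*` at `x = r • (y / ‖y‖)` with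
`r ≍ ‖y‖ ^ (1 / β)` then gives the growth `U* y ≥ c ‖y‖ ^ (1 + 1 / β)`. On the other hand `U*` is
nonnegative with `U* 0 = 0`, so `∇U* 0 = 0`, and the `C^{2,α}` Taylor expansion at `0` gives
`U* y ≤ ⟪D²U* 0 y, y⟫ / 2 + L₂ ‖y‖ ^ (2 + α)`. As `1 + 1 / β < 2 + α`, comparing the two bounds at
`y = t • e` for one small `t > 0` bounds `⟪D²U* 0 e, e⟫` below uniformly in the unit vector `e`.
-/

lemma ConvexOn.add_le_of_hasFDerivAt {E : Type*} [NormedAddCommGroup E] [NormedSpace ℝ E]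
    {S : Set E} {F : E → ℝ} {f : E →L[ℝ] ℝ} {a b : E} (hF : ConvexOn ℝ S F)
    (ha : a ∈ S) (hb : b ∈ S) (hf : HasFDerivAt F f a) : F a + f (b - a) ≤ F b := by
  set g : ℝ →ᵃ[ℝ] E := AffineMap.lineMap a b
  have hline : HasDerivAt (F ∘ g) (f (b - a)) 0 :=
    (by simpa [g] using hf : HasFDerivAt F f (g 0)).comp_hasDerivAt 0
      AffineMap.hasDerivAt_lineMap
  have hslope := (hF.comp_affineMap g).le_slope_of_hasDerivAt
    (by simpa [g] using ha) (by simpa [g] using hb) zero_lt_one hline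
  simp only [g, slope, Function.comp_apply, AffineMap.lineMap_apply_zero,
    AffineMap.lineMap_apply_one, sub_zero, inv_one, one_smul, vsub_eq_sub] at hslope
  linarith

lemma abs_taylor_two_remainder_le {g g' g'' : ℝ → ℝ} {M : ℝ}
    (hg : ∀ τ ∈ Icc (0 : ℝ) 1, HasDerivAt g (g' τ) τ)
    (hg' : ∀ τ ∈ Icc (0 : ℝ) 1, HasDerivAt g' (g'' τ) τ)
    (hM : ∀ τ ∈ Icc (0 : ℝ) 1, |g'' τ - g'' 0| ≤ M) :
    |g 1 - g 0 - g' 0 - g'' 0 / 2| ≤ M := by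
  have hM0 : 0 ≤ M := (abs_nonneg _).trans (hM 0 (left_mem_Icc.2 zero_le_one))
  have hfirst : ∀ τ ∈ Icc (0 : ℝ) 1, |g' τ - g' 0 - g'' 0 * τ| ≤ M := by
    intro τ hτ
    have hder : ∀ σ ∈ Icc (0 : ℝ) 1, HasDerivWithinAt (fun σ => g' σ - g'' 0 * σ)
        (g'' σ - g'' 0) (Icc 0 1) σ := fun σ hσ =>
      ((hg' σ hσ).sub (by simpa using (hasDerivAt_id σ).const_mul (g'' 0))).hasDerivWithinAt
    have hmvt := norm_image_sub_le_of_norm_deriv_le_segment' hder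
      (fun σ hσ => hM σ (Ico_subset_Icc_self hσ)) τ hτ
    simp only [Real.norm_eq_abs, mul_zero, sub_zero] at hmvt
    calc |g' τ - g' 0 - g'' 0 * τ| = |g' τ - g'' 0 * τ - g' 0| := by rw [sub_right_comm]
      _ ≤ M * τ := hmvt
      _ ≤ M := mul_le_of_le_one_right hM0 hτ.2
  have hder : ∀ σ ∈ Icc (0 : ℝ) 1, HasDerivWithinAt
      (fun σ => g σ - g' 0 * σ - g'' 0 / 2 * σ ^ 2) (g' σ - g' 0 - g'' 0 * σ) (Icc 0 1) σ := by
    intro σ hσ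
    have hquad : HasDerivAt (fun σ : ℝ => g'' 0 / 2 * σ ^ 2) (g'' 0 * σ) σ :=
      ((hasDerivAt_pow 2 σ).const_mul (g'' 0 / 2)).congr_deriv (by norm_num; ring)
    exact (((hg σ hσ).sub (by simpa using (hasDerivAt_id σ).const_mul (g' 0))).sub
      hquad).hasDerivWithinAt
  have hmvt := norm_image_sub_le_of_norm_deriv_le_segment_01' hder
    (fun σ hσ => hfirst σ (Ico_subset_Icc_self hσ))
  simp only [Real.norm_eq_abs] at hmvt
  convert hmvt using 2
  ring

lemma eventually_mul_rpow_lt_mul_rpow {a b p r : ℝ} (ha : 0 < a) (hpr : p < r) :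
    ∀ᶠ t in 𝓝[>] 0, b * t ^ r < a * t ^ p := by
  have hrp : 0 < r - p := sub_pos.2 hpr
  have hlim : Tendsto (fun t : ℝ => b * t ^ (r - p)) (𝓝[>] 0) (𝓝 0) := by
    have := (continuousAt_rpow_const 0 (r - p) (.inr hrp.le)).tendsto.const_mul b
    simpa [zero_rpow hrp.ne'] using this.mono_left nhdsWithin_le_nhds
  filter_upwards [hlim.eventually (gt_mem_nhds ha), self_mem_nhdsWithin] with t ht htpos
  calc b * t ^ r = b * t ^ (r - p) * t ^ p := by
        rw [mul_assoc, ← rpow_add htpos, sub_add_cancel]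
    _ < a * t ^ p := mul_lt_mul_of_pos_right ht (rpow_pos_of_pos htpos p)

section InnerProductSpace

variable {E : Type*} [NormedAddCommGroup E] [InnerProductSpace ℝ E]

lemma mul_norm_sq_le_inner_of_forall_norm_eq_one {A : E →L[ℝ] E} {κ : ℝ}
    (h : ∀ e : E, ‖e‖ = 1 → κ ≤ ⟪A e, e⟫) (v : E) : κ * ‖v‖ ^ 2 ≤ ⟪A v, v⟫ := by
  rcases eq_or_ne v 0 with rfl | hv
  · simp
  have hv' : 0 < ‖v‖ := norm_pos_iff.2 hv
  have hunit := h (‖v‖⁻¹ • v) (by rw [norm_smul, norm_inv, norm_norm, inv_mul_cancel₀ hv'.ne'])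
  rw [map_smul, real_inner_smul_left, real_inner_smul_right] at hunit
  calc κ * ‖v‖ ^ 2 ≤ ‖v‖⁻¹ * (‖v‖⁻¹ * ⟪A v, v⟫) * ‖v‖ ^ 2 := by gcongr
    _ = ⟪A v, v⟫ := by field_simp

lemma exists_mul_norm_sq_le_inner_of_rpow_le {A : E →L[ℝ] E} {f : E → ℝ} {c C p r δ : ℝ}
    (hc : 0 < c) (hpr : p < r) (hδ : 0 < δ)
    (hlow : ∀ y : E, ‖y‖ < δ → c * ‖y‖ ^ p ≤ f y)
    (hup : ∀ y : E, ‖y‖ < δ → f y ≤ ⟪A y, y⟫ / 2 + C * ‖y‖ ^ r) :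
    ∃ κ > 0, ∀ v : E, κ * ‖v‖ ^ 2 ≤ ⟪A v, v⟫ := by
  obtain ⟨t, hsmall, htpos, htδ⟩ :=
    ((eventually_mul_rpow_lt_mul_rpow (b := C) (half_pos hc) hpr).and (Ioo_mem_nhdsGT hδ)).exists
  refine ⟨c * t ^ p / t ^ 2, by positivity, mul_norm_sq_le_inner_of_forall_norm_eq_one ?_⟩
  intro e he
  have hte : ‖t • e‖ = t := by rw [norm_smul, he, mul_one, Real.norm_of_nonneg htpos.le]
  have hq : ⟪A (t • e), t • e⟫ = t ^ 2 * ⟪A e, e⟫ := by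
    rw [map_smul, real_inner_smul_left, real_inner_smul_right]; ring
  have hsand := (hlow (t • e) (by rwa [hte])).trans (hup (t • e) (by rwa [hte]))
  rw [hte, hq] at hsand
  rw [div_le_iff₀ (by positivity)]
  linarith

noncomputable def legendreOn (s : Set E) (U : E → ℝ) (y : E) : ℝ :=
  ⨆ x : s, ⟪(x : E), y⟫ - U x

section Legendre

variable {s : Set E} {U : E → ℝ}

lemma bddAbove_range_inner_sub (hs : Bornology.IsBounded s) (hU : ∀ x ∈ s, 0 ≤ U x) (y : E) :
    BddAbove (range fun x : s => ⟪(x : E), y⟫ - U x) := by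
  obtain ⟨R, hR⟩ := hs.subset_closedBall 0
  refine ⟨R * ‖y‖, ?_⟩
  rintro _ ⟨⟨x, hx⟩, rfl⟩
  have hxR : ‖x‖ ≤ R := mem_closedBall_zero_iff.1 (hR hx)
  calc ⟪x, y⟫ - U x ≤ ‖x‖ * ‖y‖ := by linarith [real_inner_le_norm x y, hU x hx]
    _ ≤ R * ‖y‖ := by gcongr

lemma inner_sub_le_legendreOn (hs : Bornology.IsBounded s) (hU : ∀ x ∈ s, 0 ≤ U x)
    {x : E} (hx : x ∈ s) (y : E) : ⟪x, y⟫ - U x ≤ legendreOn s U y :=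
  le_ciSup (bddAbove_range_inner_sub hs hU y) ⟨x, hx⟩

lemma legendreOn_nonneg (hs : Bornology.IsBounded s) (hU : ∀ x ∈ s, 0 ≤ U x) (h0 : (0 : E) ∈ s)
    (hU0 : U 0 = 0) (y : E) : 0 ≤ legendreOn s U y := by
  simpa [hU0] using inner_sub_le_legendreOn hs hU h0 y

lemma legendreOn_zero (hU : ∀ x ∈ s, 0 ≤ U x) (h0 : (0 : E) ∈ s) (hU0 : U 0 = 0) :
    legendreOn s U 0 = 0 := by
  have : Nonempty s := ⟨⟨0, h0⟩⟩
  have hle : ∀ x : s, ⟪(x : E), 0⟫ - U x ≤ 0 := fun x => by simpa using hU x x.2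
  refine le_antisymm (ciSup_le hle) ?_
  simpa [legendreOn, hU0] using le_ciSup (f := fun x : s => ⟪(x : E), 0⟫ - U x)
    ⟨0, by rintro _ ⟨x, rfl⟩; exact hle x⟩ ⟨0, h0⟩

end Legendre

lemma exists_mul_rpow_le_legendreOn_ball {U : E → ℝ} {M β : ℝ} (hM : 0 < M) (hβ : 0 < β)
    (hU : ∀ x ∈ ball (0 : E) 1, 0 ≤ U x)
    (hUle : ∀ x ∈ ball (0 : E) 1, U x ≤ M * ‖x‖ ^ (1 + β)) :
    ∃ c > 0, ∀ y : E, ‖y‖ < 2 * M → c * ‖y‖ ^ (1 + β⁻¹) ≤ legendreOn (ball 0 1) U y := by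
  refine ⟨((2 * M) ^ β⁻¹)⁻¹ / 2, by positivity, fun y hy => ?_⟩
  -- `r` solves `M * r ^ β = ‖y‖ / 2`, so that `U` eats only half of the gain `⟪x, y⟫ = r * ‖y‖`.
  set r := (‖y‖ / (2 * M)) ^ β⁻¹ with hr
  have hr0 : 0 ≤ r := by positivity
  have hr1 : r < 1 :=
    rpow_lt_one (by positivity) ((div_lt_one (by positivity)).2 hy) (by positivity)
  have hrβ : r ^ β = ‖y‖ / (2 * M) := by
    rw [hr, ← rpow_mul (by positivity), inv_mul_cancel₀ hβ.ne', rpow_one]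
  have hcancel : r / ‖y‖ * ‖y‖ = r := div_mul_cancel_of_imp fun h => by
    rw [hr, h, zero_div, zero_rpow (inv_ne_zero hβ.ne')]
  set x := (r / ‖y‖) • y
  have hx : ‖x‖ = r := by
    rw [norm_smul, norm_div, norm_norm, Real.norm_of_nonneg hr0, hcancel]
  have hxball : x ∈ ball (0 : E) 1 := mem_ball_zero_iff.2 (hx ▸ hr1)
  have hxy : ⟪x, y⟫ = r * ‖y‖ := by
    rw [real_inner_smul_left, real_inner_self_eq_norm_sq, sq, ← mul_assoc, hcancel]
  have hUx : U x ≤ r * ‖y‖ / 2 := calc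
    U x ≤ M * r ^ (1 + β) := hx ▸ hUle x hxball
    _ = r * ‖y‖ / 2 := by rw [rpow_one_add' hr0 (by positivity), hrβ]; field_simp
  have hlow := inner_sub_le_legendreOn isBounded_ball hU hxball y
  calc ((2 * M) ^ β⁻¹)⁻¹ / 2 * ‖y‖ ^ (1 + β⁻¹) = r * ‖y‖ / 2 := by
        rw [hr, div_rpow (norm_nonneg y) (by positivity),
          rpow_one_add' (norm_nonneg y) (by positivity)]
        ring
    _ ≤ legendreOn (ball 0 1) U y := by linarith

variable [CompleteSpace E]

lemma ConvexOn.le_add_mul_norm_rpow {s : Set E} {U : E → ℝ} {L β : ℝ} (hU : ConvexOn ℝ s U)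
    (hs : IsOpen s) (h0 : (0 : E) ∈ s) (hdiff : DifferentiableOn ℝ U s) (hβ : 0 ≤ β)
    (hgrad : ∀ x ∈ s, ‖gradient U x‖ ≤ L * ‖x‖ ^ β) {x : E} (hx : x ∈ s) :
    U x ≤ U 0 + L * ‖x‖ ^ (1 + β) := by
  have hsupp := hU.add_le_of_hasFDerivAt hx h0
    (hdiff.differentiableAt (hs.mem_nhds hx)).hasFDerivAt
  rw [zero_sub, map_neg, ← inner_gradient_left] at hsupp
  calc U x ≤ U 0 + ⟪gradient U x, x⟫ := by linarith
    _ ≤ U 0 + ‖gradient U x‖ * ‖x‖ := by gcongr; exact real_inner_le_norm _ _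
    _ ≤ U 0 + L * ‖x‖ ^ β * ‖x‖ := by gcongr; exact hgrad x hx
    _ = U 0 + L * ‖x‖ ^ (1 + β) := by
      rw [rpow_one_add' (norm_nonneg x) (by positivity)]; ring

lemma ContDiffAt.differentiableAt_gradient {f : E → ℝ} {x : E} (hf : ContDiffAt ℝ 2 f x) :
    DifferentiableAt ℝ (gradient f) x :=
  (InnerProductSpace.toDual ℝ E).symm.toContinuousLinearEquiv.differentiableAt.comp x
    ((hf.fderiv_right (m := 1) (by norm_num)).differentiableAt (by norm_num))

lemma abs_taylor_two_remainder_le_of_holder_hessian {f : E → ℝ} {x v : E} {ρ L α : ℝ}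
    (hf : ContDiffOn ℝ 2 f (ball x ρ)) (hvρ : ‖v‖ < ρ) (hα : 0 ≤ α)
    (hH : ∀ y ∈ ball x ρ,
      ‖fderiv ℝ (gradient f) y - fderiv ℝ (gradient f) x‖ ≤ L * ‖y - x‖ ^ α) :
    |f (x + v) - f x - ⟪gradient f x, v⟫ - ⟪fderiv ℝ (gradient f) x v, v⟫ / 2|
      ≤ L * ‖v‖ ^ (α + 2) := by
  rcases eq_or_ne v 0 with rfl | hv
  · simp [zero_rpow (by positivity : α + 2 ≠ 0)]
  have hv0 : 0 < ‖v‖ := norm_pos_iff.2 hv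
  have hL : 0 ≤ L := by
    have := (norm_nonneg _).trans (hH (x + v) (by simpa using hvρ))
    rw [add_sub_cancel_left] at this
    exact nonneg_of_mul_nonneg_left this (rpow_pos_of_pos hv0 α)
  have hseg : ∀ τ ∈ Icc (0 : ℝ) 1, x + τ • v ∈ ball x ρ := fun τ hτ => by
    rw [mem_ball, dist_eq_norm, add_sub_cancel_left, norm_smul, Real.norm_of_nonneg hτ.1]
    exact (mul_le_of_le_one_left (norm_nonneg v) hτ.2).trans_lt hvρ
  have hat : ∀ τ ∈ Icc (0 : ℝ) 1, ContDiffAt ℝ 2 f (x + τ • v) := fun τ hτ =>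
    hf.contDiffAt (isOpen_ball.mem_nhds (hseg τ hτ))
  have hline (τ : ℝ) : HasDerivAt (fun σ : ℝ => x + σ • v) v τ := by
    simpa using ((hasDerivAt_id τ).smul_const v).const_add x
  set H := fderiv ℝ (gradient f)
  have hH' : ∀ τ ∈ Icc (0 : ℝ) 1, ‖H (x + τ • v) - H x‖ ≤ L * ‖v‖ ^ α := fun τ hτ => calc
    ‖H (x + τ • v) - H x‖ ≤ L * ‖τ • v‖ ^ α := by simpa using hH _ (hseg τ hτ)
    _ ≤ L * ‖v‖ ^ α := by
      gcongr
      rw [norm_smul, Real.norm_of_nonneg hτ.1]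
      exact mul_le_of_le_one_left (norm_nonneg v) hτ.2
  have htaylor := abs_taylor_two_remainder_le (g := fun τ => f (x + τ • v))
    (g' := fun τ => ⟪gradient f (x + τ • v), v⟫) (g'' := fun τ => ⟪H (x + τ • v) v, v⟫)
    (M := L * ‖v‖ ^ (α + 2)) ?_ ?_ ?_
  · simpa using htaylor
  · intro τ hτ
    have := ((hat τ hτ).differentiableAt (by norm_num)).hasFDerivAt.comp_hasDerivAt τ (hline τ)
    simpa only [Function.comp_def, ← inner_gradient_left] using this
  · intro τ hτ
    simpa using ((hat τ hτ).differentiableAt_gradient.hasFDerivAt.comp_hasDerivAt τ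
      (hline τ)).inner ℝ (hasDerivAt_const τ v)
  · intro τ hτ
    calc |⟪H (x + τ • v) v, v⟫ - ⟪H (x + (0 : ℝ) • v) v, v⟫|
        = |⟪(H (x + τ • v) - H x) v, v⟫| := by simp [inner_sub_left]
      _ ≤ ‖H (x + τ • v) - H x‖ * ‖v‖ * ‖v‖ :=
        (abs_real_inner_le_norm _ _).trans (by gcongr; exact ContinuousLinearMap.le_opNorm _ _)
      _ ≤ L * ‖v‖ ^ α * ‖v‖ * ‖v‖ := by gcongr; exact hH' τ hτ
      _ = L * ‖v‖ ^ (α + 2) := by rw [rpow_add hv0, rpow_two]; ring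

end InnerProductSpace

theorem dual_strong_convexity_at_origin
    (n : ℕ) (α β L L₂ : ℝ)
    (hα : α ∈ Set.Ioo (0:ℝ) 1) (hβ : β ∈ Set.Ioo (1 / (1 + α)) 1)
    (U : EuclideanSpace ℝ (Fin n) → ℝ)
    (hconv : StrictConvexOn ℝ (ball (0 : EuclideanSpace ℝ (Fin n)) 1) U)
    (hU0 : U 0 = 0)
    (hDU0 : HasFDerivAt U (0 : EuclideanSpace ℝ (Fin n) →L[ℝ] ℝ) 0)
    (hdiff : DifferentiableOn ℝ U (ball (0 : EuclideanSpace ℝ (Fin n)) 1))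
    (hHolder : ∀ x ∈ ball (0 : EuclideanSpace ℝ (Fin n)) 1,
      ∀ y ∈ ball (0 : EuclideanSpace ℝ (Fin n)) 1,
        ‖gradient U x - gradient U y‖ ≤ L * ‖x - y‖ ^ β)
    (Ustar : EuclideanSpace ℝ (Fin n) → ℝ)
    (hUstar : Ustar = fun y => ⨆ x : ball (0 : EuclideanSpace ℝ (Fin n)) 1,
      (⟪(x : EuclideanSpace ℝ (Fin n)), y⟫ - U x))
    (s : Set (EuclideanSpace ℝ (Fin n))) (hs : s ∈ nhds (0 : EuclideanSpace ℝ (Fin n)))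
    (hC2 : ContDiffOn ℝ 2 Ustar s)
    (hHolder2 : ∀ y ∈ s, ∀ z ∈ s,
      ‖fderiv ℝ (gradient Ustar) y - fderiv ℝ (gradient Ustar) z‖ ≤ L₂ * ‖y - z‖ ^ α) :
    ∃ c > (0:ℝ), ∀ v : EuclideanSpace ℝ (Fin n),
      c * ‖v‖ ^ 2 ≤ ⟪fderiv ℝ (gradient Ustar) 0 v, v⟫ := by
  obtain ⟨hα0, -⟩ := hα
  obtain ⟨hβα, -⟩ := hβ
  have hβ0 : 0 < β := lt_trans (by positivity) hβα
  have hexp : 1 + β⁻¹ < α + 2 := by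
    linarith [inv_lt_of_inv_lt₀ (by positivity) ((one_div (1 + α)) ▸ hβα)]
  have h0 : (0 : EuclideanSpace ℝ (Fin n)) ∈ ball 0 1 := mem_ball_self one_pos
  have hUnonneg (x) (hx : x ∈ ball (0 : EuclideanSpace ℝ (Fin n)) 1) : 0 ≤ U x := by
    simpa [hU0] using hconv.convexOn.add_le_of_hasFDerivAt h0 hx hDU0
  have hgradU (x) (hx : x ∈ ball (0 : EuclideanSpace ℝ (Fin n)) 1) :
      ‖gradient U x‖ ≤ L * ‖x‖ ^ β := by
    simpa [gradient, hDU0.fderiv] using hHolder x hx 0 h0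
  have hUle (x) (hx : x ∈ ball (0 : EuclideanSpace ℝ (Fin n)) 1) :
      U x ≤ max L 1 * ‖x‖ ^ (1 + β) := by
    have := hconv.convexOn.le_add_mul_norm_rpow isOpen_ball h0 hdiff hβ0.le hgradU hx
    rw [hU0, zero_add] at this
    exact this.trans (by gcongr; exact le_max_left L 1)
  obtain ⟨c, hc, hlow⟩ := exists_mul_rpow_le_legendreOn_ball
    (one_pos.trans_le (le_max_right L 1)) hβ0 hUnonneg hUle
  replace hUstar : Ustar = legendreOn (ball 0 1) U := hUstar
  have hUstar0 : Ustar 0 = 0 := hUstar ▸ legendreOn_zero hUnonneg h0 hU0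
  have hgrad0 : gradient Ustar 0 = 0 := by
    have hmin : IsLocalMin Ustar 0 := Eventually.of_forall fun y => by
      rw [hUstar0, hUstar]; exact legendreOn_nonneg isBounded_ball hUnonneg h0 hU0 y
    simp [gradient, hmin.fderiv_eq_zero]
  obtain ⟨ρ, hρ, hρs⟩ := Metric.mem_nhds_iff.mp hs
  refine exists_mul_norm_sq_le_inner_of_rpow_le (f := Ustar) (C := L₂)
    (δ := min (2 * max L 1) ρ) hc hexp (by positivity)
    (fun y hy => hUstar ▸ hlow y (hy.trans_le (min_le_left _ _))) (fun y hy => ?_)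
  have htaylor := abs_taylor_two_remainder_le_of_holder_hessian (x := 0) (v := y)
    (hC2.mono hρs) (by simpa using hy.trans_le (min_le_right _ _)) hα0.le
    (fun z hz => by simpa using hHolder2 z (hρs hz) 0 (hρs (mem_ball_self hρ)))
  rw [zero_add, hUstar0, hgrad0, inner_zero_left] at htaylor
  linarith [(abs_le.1 htaylor).2]
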